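/- arXiv:2002.00486 — 4 statements merged into one kernel-verified Lean document; each statement's English description precedes it below -/
import Mathlib

section
/- Let S ⊂ P^n(ℝ) be a connected semi-algebraic set and ℓ a real linear form on ℝ^{n+1} whose zero hyperplane does not meet S. Then the projective convex hull of S (defined by dehomogenizing at any hyperplane missing S) equals P(cone{x ∈ Ŝ : ℓ(x) > 0}), where Ŝ is the affine cone over S. In particular, the convex hull does not depend on the choice of such a linear form ℓ. -/
open Set

/-- Semialgebraic subsets of `ℝ^σ`: finite boolean combinations of sets
`{x | 0 < p(x)}` for polynomials `p`. -/
inductive IsSemialgebraic {σ : Type*} : Set (σ → ℝ) → Prop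
  | basic (f : MvPolynomial σ ℝ) : IsSemialgebraic {x | 0 < MvPolynomial.eval x f}
  | compl {s : Set (σ → ℝ)} : IsSemialgebraic s → IsSemialgebraic sᶜ
  | union {s t : Set (σ → ℝ)} : IsSemialgebraic s → IsSemialgebraic t →
      IsSemialgebraic (s ∪ t)

/-- The Euclidean (quotient) topology on real projective space. -/
noncomputable def projEuclTop (n : ℕ) : TopologicalSpace (Projectivization ℝ (Fin (n + 1) → ℝ)) :=
  TopologicalSpace.coinduced
    (fun v : {w : Fin (n + 1) → ℝ // w ≠ 0} => Projectivization.mk ℝ v.1 v.2) inferInstance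

/-- The affine cone (minus the origin) over a subset of projective space. -/
def coneOver {n : ℕ} (S : Set (Projectivization ℝ (Fin (n + 1) → ℝ))) :
    Set (Fin (n + 1) → ℝ) :=
  {v | ∃ h : v ≠ 0, Projectivization.mk ℝ v h ∈ S}

/-- The projective convex hull of `S` formed by dehomogenizing at the affine chart
`{m = 1}` of the hyperplane `{m = 0}`, taking the convex hull there, and mapping back. -/
def convVia {n : ℕ} (m : (Fin (n + 1) → ℝ) →ₗ[ℝ] ℝ)
    (S : Set (Projectivization ℝ (Fin (n + 1) → ℝ))) :
    Set (Projectivization ℝ (Fin (n + 1) → ℝ)) :=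
  {x | ∃ v ∈ convexHull ℝ {w ∈ coneOver S | m w = 1}, ∃ h : v ≠ 0,
    x = Projectivization.mk ℝ v h}

/-- `ℙ(cone A)`: the image in projective space of the convex cone generated by `A`. -/
def projCone {n : ℕ} (A : Set (Fin (n + 1) → ℝ)) :
    Set (Projectivization ℝ (Fin (n + 1) → ℝ)) :=
  {x | ∃ v, (∃ c : ℝ, 0 ≤ c ∧ ∃ y ∈ convexHull ℝ A, v = c • y) ∧
    ∃ h : v ≠ 0, x = Projectivization.mk ℝ v h}

/-! The product `ℓ · m` is a quadratic form, so its sign is well defined on `ℙⁿ(ℝ)`, and the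
sets where it is positive resp. negative are open. As `S` is connected and `ℓ · m` does not
vanish on `Ŝ`, either `ℓ` and `m` have the same sign on all of `Ŝ` or opposite signs on all of
`Ŝ`. Replacing `m` by `-m` does not change the hull, so we may assume
`{ℓ > 0} ∩ Ŝ = {m > 0} ∩ Ŝ`. Finally, every point of the convex hull of `{m > 0} ∩ Ŝ` is a
positive multiple of a point of the convex hull of `{m = 1} ∩ Ŝ`, since the positive cone over
the latter is convex. -/

namespace Projectivization

variable {K V : Type*} [DivisionRing K] [AddCommGroup V] [Module K V]

lemma mk_smul_eq {c : K} {v : V} (hcv : c • v ≠ 0) (hv : v ≠ 0) :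
    mk K (c • v) hcv = mk K v hv :=
  (mk_eq_mk_iff' K _ _ _ _).2 ⟨c, rfl⟩

lemma mk_neg_eq {v : V} (hv : v ≠ 0) : mk K (-v) (neg_ne_zero.2 hv) = mk K v hv :=
  (mk_eq_mk_iff' K _ _ _ _).2 ⟨-1, neg_one_smul K v⟩

end Projectivization

open Projectivization

section ProjectiveHull

variable {n : ℕ}

lemma coneOver_smul_mem {S : Set (Projectivization ℝ (Fin (n + 1) → ℝ))}
    {v : Fin (n + 1) → ℝ} (hv : v ∈ coneOver S) {c : ℝ} (hc : c ≠ 0) :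
    c • v ∈ coneOver S :=
  ⟨smul_ne_zero hc hv.1, by rw [mk_smul_eq]; exact hv.2⟩

lemma neg_mem_coneOver_iff {S : Set (Projectivization ℝ (Fin (n + 1) → ℝ))}
    {v : Fin (n + 1) → ℝ} : -v ∈ coneOver S ↔ v ∈ coneOver S :=
  ⟨fun hv ↦ by simpa using coneOver_smul_mem hv (neg_ne_zero.2 one_ne_zero),
    fun hv ↦ by simpa using coneOver_smul_mem hv (neg_ne_zero.2 one_ne_zero)⟩

lemma convVia_eq_projCone_pos (m : (Fin (n + 1) → ℝ) →ₗ[ℝ] ℝ)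
    (S : Set (Projectivization ℝ (Fin (n + 1) → ℝ))) :
    convVia m S = projCone {v ∈ coneOver S | 0 < m v} := by
  set A := {w ∈ coneOver S | m w = 1}
  have hA : Convex ℝ (convexHull ℝ A) := convex_convexHull ℝ A
  have hcone :
      convexHull ℝ {v ∈ coneOver S | 0 < m v} ⊆ ConvexCone.hull ℝ (convexHull ℝ A) := by
    refine convexHull_min (fun v ⟨hv, hmv⟩ ↦ ?_) (ConvexCone.convex _)
    have hvA : (m v)⁻¹ • v ∈ A :=
      ⟨coneOver_smul_mem hv (inv_ne_zero hmv.ne'), by simp [hmv.ne']⟩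
    exact (ConvexCone.mem_hull_of_convex hA).2 ⟨m v, hmv,
      mem_smul_set.2 ⟨_, subset_convexHull ℝ A hvA, smul_inv_smul₀ hmv.ne' v⟩⟩
  ext x
  constructor
  · rintro ⟨v, hv, hv0, rfl⟩
    refine ⟨v, ⟨1, zero_le_one, v, convexHull_mono ?_ hv, (one_smul ℝ v).symm⟩, hv0, rfl⟩
    exact fun w ⟨hw, hmw⟩ ↦ ⟨hw, hmw ▸ one_pos⟩
  · rintro ⟨_, ⟨c, -, y, hy, rfl⟩, hcy, rfl⟩
    obtain ⟨t, -, w, hw, rfl⟩ := (ConvexCone.mem_hull_of_convex hA).1 (hcone hy)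
    simp_rw [smul_smul] at hcy ⊢
    exact ⟨w, hw, right_ne_zero_of_smul hcy, mk_smul_eq hcy _⟩

lemma convVia_neg (m : (Fin (n + 1) → ℝ) →ₗ[ℝ] ℝ)
    (S : Set (Projectivization ℝ (Fin (n + 1) → ℝ))) : convVia (-m) S = convVia m S := by
  have hA : {w ∈ coneOver S | (-m) w = 1} = -{w ∈ coneOver S | m w = 1} := by
    ext w
    simp only [mem_neg, mem_ofPred_eq, LinearMap.neg_apply, map_neg, neg_mem_coneOver_iff]
  ext x
  simp only [convVia, hA, convexHull_neg, mem_neg, mem_ofPred_eq]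
  constructor
  · rintro ⟨v, hv, hv0, rfl⟩
    exact ⟨-v, hv, neg_ne_zero.2 hv0, (mk_neg_eq hv0).symm⟩
  · rintro ⟨v, hv, hv0, rfl⟩
    exact ⟨-v, by rwa [neg_neg], neg_ne_zero.2 hv0, (mk_neg_eq hv0).symm⟩

end ProjectiveHull

section QuadraticSign

attribute [local instance] projEuclTop

variable {n : ℕ} {f : (Fin (n + 1) → ℝ) → ℝ}

lemma pos_apply_rep_mk_iff (hf : ∀ (a : ℝ) v, f (a • v) = a ^ 2 * f v)
    {v : Fin (n + 1) → ℝ} (hv : v ≠ 0) : 0 < f (mk ℝ v hv).rep ↔ 0 < f v := by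
  obtain ⟨a, ha⟩ := exists_smul_eq_mk_rep ℝ v hv
  rw [← ha, Units.smul_def, hf]
  exact mul_pos_iff_of_pos_left (sq_pos_iff.2 a.ne_zero)

lemma isOpen_setOf_pos_apply_rep (hf : ∀ (a : ℝ) v, f (a • v) = a ^ 2 * f v)
    (hf_cont : Continuous f) :
    IsOpen {x : Projectivization ℝ (Fin (n + 1) → ℝ) | 0 < f x.rep} := by
  have hpre : (fun v : {w : Fin (n + 1) → ℝ // w ≠ 0} ↦ mk ℝ v.1 v.2) ⁻¹'
      {x | 0 < f x.rep} = {v | 0 < f v.1} :=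
    ext fun v ↦ pos_apply_rep_mk_iff hf v.2
  exact isOpen_coinduced.2
    (hpre ▸ isOpen_lt continuous_const (hf_cont.comp continuous_subtype_val))

lemma pos_or_neg_on_coneOver (hf : ∀ (a : ℝ) v, f (a • v) = a ^ 2 * f v)
    (hf_cont : Continuous f) {S : Set (Projectivization ℝ (Fin (n + 1) → ℝ))}
    (hS : IsPreconnected S) (hf_ne : ∀ v ∈ coneOver S, f v ≠ 0) :
    (∀ v ∈ coneOver S, 0 < f v) ∨ (∀ v ∈ coneOver S, f v < 0) := by
  have hf_neg : ∀ (a : ℝ) v, -f (a • v) = a ^ 2 * -f v := fun a v ↦ by rw [hf, mul_neg]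
  have hcover : S ⊆ {x | 0 < f x.rep} ∪ {x | 0 < -f x.rep} := fun x hx ↦
    (hf_ne x.rep ⟨x.rep_nonzero, by rwa [mk_rep]⟩).lt_or_gt.symm.imp id neg_pos.2
  have hdisj : Disjoint {x : Projectivization ℝ _ | 0 < f x.rep} {x | 0 < -f x.rep} :=
    disjoint_left.2 fun x (hx : 0 < f x.rep) (hx' : 0 < -f x.rep) ↦ (neg_pos.1 hx').not_gt hx
  rcases hS.subset_or_subset (isOpen_setOf_pos_apply_rep hf hf_cont)
    (isOpen_setOf_pos_apply_rep (f := fun v ↦ -f v) hf_neg hf_cont.neg) hdisj hcover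
    with hS | hS
  · exact .inl fun v ⟨hv, hvS⟩ ↦ (pos_apply_rep_mk_iff hf hv).1 (hS hvS)
  · exact .inr fun v ⟨hv, hvS⟩ ↦
      neg_pos.1 ((pos_apply_rep_mk_iff (f := fun v ↦ -f v) hf_neg hv).1 (hS hvS))

end QuadraticSign

theorem stmt0_general (n : ℕ) (S : Set (Projectivization ℝ (Fin (n + 1) → ℝ)))
    (hconn : @IsConnected _ (projEuclTop n) S)
    (ℓ : (Fin (n + 1) → ℝ) →ₗ[ℝ] ℝ)
    (hℓ : ∀ v ∈ coneOver S, ℓ v ≠ 0) :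
    ∀ m : (Fin (n + 1) → ℝ) →ₗ[ℝ] ℝ, (∀ v ∈ coneOver S, m v ≠ 0) →
      convVia m S = projCone {v ∈ coneOver S | 0 < ℓ v} := by
  intro m hm
  have hquad : ∀ (a : ℝ) v, ℓ (a • v) * m (a • v) = a ^ 2 * (ℓ v * m v) := fun a v ↦ by
    simp only [map_smul, smul_eq_mul]; ring
  have hcont : Continuous fun v ↦ ℓ v * m v :=
    ℓ.continuous_of_finiteDimensional.mul m.continuous_of_finiteDimensional
  rcases pos_or_neg_on_coneOver hquad hcont hconn.2
    fun v hv ↦ mul_ne_zero (hℓ v hv) (hm v hv) with hpos | hneg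
  · rw [convVia_eq_projCone_pos]
    congr 1
    ext v
    exact and_congr_right fun hv ↦ (pos_iff_pos_of_mul_pos (hpos v hv)).symm
  · rw [← convVia_neg, convVia_eq_projCone_pos]
    congr 1
    ext v
    exact and_congr_right fun hv ↦ neg_pos.trans (pos_iff_neg_of_mul_neg (hneg v hv)).symm

/-- Let `S ⊂ ℙⁿ(ℝ)` be a connected semialgebraic set and `ℓ` a real linear form
whose zero hyperplane does not meet `S`.  Then for every hyperplane `{m = 0}` missing `S`,
the projective convex hull of `S` defined by dehomogenizing at `{m = 0}` equals
`ℙ(cone {x ∈ Ŝ : ℓ(x) > 0})`; in particular the convex hull does not depend on the choice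
of such a hyperplane, nor of the linear form `ℓ`. -/
theorem stmt0 (n : ℕ) (S : Set (Projectivization ℝ (Fin (n + 1) → ℝ)))
    (hsa : IsSemialgebraic (coneOver S))
    (hconn : @IsConnected _ (projEuclTop n) S)
    (ℓ : (Fin (n + 1) → ℝ) →ₗ[ℝ] ℝ)
    (hℓ : ∀ v ∈ coneOver S, ℓ v ≠ 0) :
    ∀ m : (Fin (n + 1) → ℝ) →ₗ[ℝ] ℝ, (∀ v ∈ coneOver S, m v ≠ 0) →
      convVia m S = projCone {v ∈ coneOver S | 0 < ℓ v} :=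
  stmt0_general n S hconn ℓ hℓ
end

section
/- Let Y ⊂ P^n be an irreducible projective variety with center cent(Y), and let H ⊂ P^n be a hyperplane with cent(Y) ⊄ H. Then the center of Y ∩ H equals cent(Y) ∩ H. -/
/-- The Zariski topology on the projectivization of `σ → K`. -/
def projZariski (K : Type*) [Field K] (σ : Type*) :
    TopologicalSpace (Projectivization K (σ → K)) :=
  TopologicalSpace.generateFrom
    {U | ∃ f : MvPolynomial σ K, (∃ d, f.IsHomogeneous d) ∧
      U = {x | MvPolynomial.eval x.rep f ≠ 0}}

/-- The projective line spanned by two points of projective space. -/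
def projLine {K : Type*} [Field K] {V : Type*} [AddCommGroup V] [Module K V]
    (p q : Projectivization K V) : Set (Projectivization K V) :=
  {z | ∃ a b : K, ∃ h : a • p.rep + b • q.rep ≠ 0,
    z = Projectivization.mk K (a • p.rep + b • q.rep) h}

/-- The center of a subset `Y` of projective space: the points `p ∈ Y` such that every line
spanned by `p` and another point of `Y` is contained in `Y`. -/
def projCenter {K : Type*} [Field K] {V : Type*} [AddCommGroup V] [Module K V]
    (Y : Set (Projectivization K V)) : Set (Projectivization K V) :=
  {p ∈ Y | ∀ x ∈ Y, projLine p x ⊆ Y}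

/-!
Let `p ∈ cent(Y)` with `p ∉ H = {φ = 0}`. In the affine cone, `Y` is stable under adding
multiples of `p`. Given `q ∈ cent(Y ∩ H)`, `x ∈ Y` and a vector `a q + b x`, subtract the
multiple of `p` that brings `b x` into `H`: the result lies on the line through `q` and a point
of `Y ∩ H`, hence in `Y`, and adding the multiple of `p` back stays in `Y`. Conversely
`cent(Y) ∩ H ⊆ cent(Y ∩ H)` holds for every `Y`, because a linear subspace is its own center.
-/

open Projectivization

section AffineCone

variable {K : Type*} [Field K] {V : Type*} [AddCommGroup V] [Module K V]

/-- The affine cone over `Y`; it contains `0` vacuously. -/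
def affineCone (Y : Set (Projectivization K V)) : Set V :=
  {v | ∀ hv : v ≠ 0, mk K v hv ∈ Y}

variable {Y Z : Set (Projectivization K V)}

variable (K) in
theorem exists_smul_mk_rep_eq (v : V) (hv : v ≠ 0) : ∃ c : K, c • (mk K v hv).rep = v := by
  obtain ⟨μ, hμ⟩ := exists_smul_eq_mk_rep K v hv
  exact ⟨(μ⁻¹ : Kˣ), by rw [← hμ, ← Units.smul_def, inv_smul_smul]⟩

theorem rep_mem_affineCone {p : Projectivization K V} (hp : p ∈ Y) : p.rep ∈ affineCone Y :=
  fun _ => by rwa [mk_rep]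

theorem smul_mem_affineCone (c : K) {v : V} (hv : v ∈ affineCone Y) : c • v ∈ affineCone Y := by
  intro hcv
  have hv0 : v ≠ 0 := right_ne_zero_of_smul hcv
  rw [show mk K (c • v) hcv = mk K v hv0 from (mk_eq_mk_iff' K _ _ hcv hv0).2 ⟨c, rfl⟩]
  exact hv hv0

theorem affineCone_inter : affineCone (Y ∩ Z) = affineCone Y ∩ affineCone Z := by
  ext v
  simp only [affineCone, Set.mem_inter_iff, Set.mem_ofPred_eq, forall_and]

theorem affineCone_setOf_rep_mem (W : Submodule K V) :
    affineCone {y : Projectivization K V | y.rep ∈ W} = W := by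
  ext v
  obtain rfl | hv0 := eq_or_ne v 0
  · simp only [affineCone, ne_eq, not_true_eq_false, IsEmpty.forall_iff, Set.mem_ofPred_eq,
      SetLike.mem_coe, W.zero_mem]
  refine ⟨fun h => ?_, fun h _ => ?_⟩
  · obtain ⟨c, hc⟩ := exists_smul_mk_rep_eq K v hv0
    rw [SetLike.mem_coe, ← hc]
    exact W.smul_mem c (h hv0)
  · obtain ⟨μ, hμ⟩ := exists_smul_eq_mk_rep K v hv0
    rw [Set.mem_ofPred_eq, ← hμ]
    exact W.smul_of_tower_mem μ h

theorem affineCone_setOf_map_rep_eq_zero (φ : V →ₗ[K] K) :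
    affineCone {y : Projectivization K V | φ y.rep = 0} = LinearMap.ker φ :=
  affineCone_setOf_rep_mem (LinearMap.ker φ)

theorem projLine_subset_iff {p x : Projectivization K V} :
    projLine p x ⊆ Y ↔ ∀ a b : K, a • p.rep + b • x.rep ∈ affineCone Y := by
  constructor
  · intro h a b hv
    exact h ⟨a, b, hv, rfl⟩
  · rintro h _ ⟨a, b, hv, rfl⟩
    exact h a b hv

theorem smul_rep_add_mem_affineCone {p : Projectivization K V} (hp : p ∈ projCenter Y) (a : K)
    {v : V} (hv : v ∈ affineCone Y) : a • p.rep + v ∈ affineCone Y := by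
  obtain rfl | hv0 := eq_or_ne v 0
  · simpa only [add_zero] using smul_mem_affineCone a (rep_mem_affineCone hp.1)
  obtain ⟨c, hc⟩ := exists_smul_mk_rep_eq K v hv0
  rw [← hc]
  exact projLine_subset_iff.1 (hp.2 _ (hv hv0)) a _

theorem projCenter_subset (Y : Set (Projectivization K V)) : projCenter Y ⊆ Y :=
  fun _ hp => hp.1

theorem projCenter_inter_subset (Y Z : Set (Projectivization K V)) :
    projCenter Y ∩ projCenter Z ⊆ projCenter (Y ∩ Z) :=
  fun _ ⟨hY, hZ⟩ =>
    ⟨⟨hY.1, hZ.1⟩, fun x hx => Set.subset_inter (hY.2 x hx.1) (hZ.2 x hx.2)⟩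

theorem projCenter_setOf_rep_mem (W : Submodule K V) :
    projCenter {y : Projectivization K V | y.rep ∈ W} = {y | y.rep ∈ W} := by
  refine Set.Subset.antisymm (projCenter_subset _) fun q hq => ⟨hq, fun x hx => ?_⟩
  refine projLine_subset_iff.2 fun a b => ?_
  rw [affineCone_setOf_rep_mem]
  exact W.add_mem (W.smul_mem a hq) (W.smul_mem b hx)

theorem projCenter_inter_hyperplane_subset {Y : Set (Projectivization K V)} {φ : V →ₗ[K] K}
    {p : Projectivization K V} (hp : p ∈ projCenter Y) (hφp : φ p.rep ≠ 0) :
    projCenter (Y ∩ {y | φ y.rep = 0}) ⊆ projCenter Y := by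
  rintro q hq
  refine ⟨hq.1.1, fun x hx => projLine_subset_iff.2 fun a b => ?_⟩
  obtain ⟨t, ht⟩ : ∃ t, t * φ p.rep = φ (b • x.rep) := ⟨_, div_mul_cancel₀ _ hφp⟩
  have hu : b • x.rep - t • p.rep ∈ affineCone (Y ∩ {y | φ y.rep = 0}) := by
    rw [affineCone_inter, affineCone_setOf_map_rep_eq_zero]
    refine ⟨?_, ?_⟩
    · rw [sub_eq_neg_add, ← neg_smul]
      exact smul_rep_add_mem_affineCone hp _ (smul_mem_affineCone b (rep_mem_affineCone hx))
    · rw [SetLike.mem_coe, LinearMap.mem_ker, map_sub, map_smul φ t, smul_eq_mul, ht, sub_self]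
  have hqu := smul_rep_add_mem_affineCone hq a hu
  rw [affineCone_inter] at hqu
  have := smul_rep_add_mem_affineCone hp t hqu.1
  convert this using 1
  abel

end AffineCone

theorem stmt2_general (K : Type*) [Field K] (n : ℕ)
    (Y : Set (Projectivization K (Fin (n + 1) → K)))
    (φ : (Fin (n + 1) → K) →ₗ[K] K)
    (H : Set (Projectivization K (Fin (n + 1) → K)))
    (hH : H = {y | φ y.rep = 0})
    (hcent : ¬ projCenter Y ⊆ H) :
    projCenter (Y ∩ H) = projCenter Y ∩ H := by
  subst hH
  obtain ⟨p, hp, hpH⟩ := Set.not_subset.mp hcent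
  refine Set.Subset.antisymm (fun q hq => ⟨projCenter_inter_hyperplane_subset hp hpH hq,
    (projCenter_subset _ hq).2⟩) ?_
  calc projCenter Y ∩ {y | φ y.rep = 0}
      = projCenter Y ∩ projCenter {y | φ y.rep = 0} :=
        congrArg _ (projCenter_setOf_rep_mem (LinearMap.ker φ)).symm
    _ ⊆ projCenter (Y ∩ {y | φ y.rep = 0}) := projCenter_inter_subset _ _

/-- Let `Y ⊆ ℙⁿ` be an irreducible projective variety and `H` a hyperplane with
`cent(Y) ⊄ H`.  Then the center of `Y ∩ H` equals `cent(Y) ∩ H`. -/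
theorem stmt2 (K : Type*) [Field K] (n : ℕ)
    (Y : Set (Projectivization K (Fin (n + 1) → K)))
    (hclosed : @IsClosed _ (projZariski K (Fin (n + 1))) Y)
    (hirr : @IsIrreducible _ (projZariski K (Fin (n + 1))) Y)
    (φ : (Fin (n + 1) → K) →ₗ[K] K) (hφ : φ ≠ 0)
    (H : Set (Projectivization K (Fin (n + 1) → K)))
    (hH : H = {y | φ y.rep = 0})
    (hcent : ¬ projCenter Y ⊆ H) :
    projCenter (Y ∩ H) = projCenter Y ∩ H :=
  stmt2_general K n Y φ H hH hcent
end

section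
/- Let C ⊂ P^{2k+2} be a general nondegenerate projectively normal curve of genus g (so of degree d = 2k + g + 2). Then the degree of the secant hypersurface σ_k(C) equals (k+2)·Σ_{i=0}^{k+1} C(g,i) − g·Σ_{i=0}^{k} C(g−1,i). If moreover g ≤ k+1, this equals (2k+4−g)·2^{g−1}. -/
/-!
Reversing the order of summation turns `∑_{j ≤ m} (j+1) C(g, m-j)` into `∑_{i ≤ m} (m+1-i) C(g,i)`,
and `i C(g,i) = g C(g-1,i-1)` rewrites the part weighted by `i`. When `g ≤ k+1` both remaining
sums are complete rows of Pascal's triangle, hence powers of `2`.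
-/

open Finset

namespace Nat

theorem sum_range_choose_of_lt {m n : ℕ} (h : m < n) : ∑ i ∈ range n, m.choose i = 2 ^ m := by
  rw [← sum_range_choose, ← sum_range_add_sum_Ico _ h, add_eq_left]
  exact sum_eq_zero fun i hi => choose_eq_zero_of_lt (mem_Ico.1 hi).1

theorem sum_range_succ_mul_choose (g n : ℕ) :
    ∑ i ∈ range (n + 1), i * g.choose i = g * ∑ i ∈ range n, (g - 1).choose i := by
  rw [sum_range_succ', zero_mul, add_zero, mul_sum]
  refine sum_congr rfl fun i _ => ?_
  cases g with
  | zero => simp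
  | succ g => rw [Nat.add_sub_cancel, mul_comm, add_one_mul_choose_eq]

theorem sum_range_add_one_mul_choose_sub_add_sum_range_mul_choose (g m : ℕ) :
    ∑ j ∈ range (m + 1), (j + 1) * g.choose (m - j) + ∑ i ∈ range (m + 1), i * g.choose i =
      (m + 1) * ∑ i ∈ range (m + 1), g.choose i := by
  rw [← sum_range_reflect, mul_sum, ← sum_add_distrib]
  refine sum_congr rfl fun i hi => ?_
  have hi : i ≤ m := mem_range_succ_iff.1 hi
  rw [Nat.add_sub_cancel, Nat.sub_sub_self hi, ← add_mul]
  congr 1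
  omega

end Nat

/-- Let `C ⊂ ℙ^{2k+2}` be a general nondegenerate projectively normal curve of
genus `g`, so of degree `d = 2k+g+2`.  By the secant degree formula, the degree of the secant
hypersurface `σ_k(C)` is `∑_{j=0}^{k+1} (−1)^j C(g+2k−d, j) C(g, k+1−j)`, which for
`d = 2k+g+2` equals `∑_{j=0}^{k+1} (j+1)·C(g, k+1−j)` (since `(−1)^j C(−2,j) = j+1`).
This equals `(k+2)·∑_{i=0}^{k+1} C(g,i) − g·∑_{i=0}^{k} C(g−1,i)`, and if moreover
`g ≤ k+1`, this equals `(2k+4−g)·2^{g−1}` (stated multiplied by `2` to stay in `ℤ`). -/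
theorem stmt16 (g k : ℕ) :
    (∑ j ∈ range (k + 2), ((j : ℤ) + 1) * (g.choose (k + 1 - j)) =
      (k + 2) * (∑ i ∈ range (k + 2), (g.choose i : ℤ)) -
        g * (∑ i ∈ range (k + 1), ((g - 1).choose i : ℤ))) ∧
    (g ≤ k + 1 →
      2 * (∑ j ∈ range (k + 2), ((j : ℤ) + 1) * (g.choose (k + 1 - j))) =
        (2 * k + 4 - (g : ℤ)) * 2 ^ g) := by
  have hweights := Nat.sum_range_add_one_mul_choose_sub_add_sum_range_mul_choose g (k + 1)
  rw [Nat.sum_range_succ_mul_choose] at hweights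
  have hdegree : ∑ j ∈ range (k + 2), ((j : ℤ) + 1) * (g.choose (k + 1 - j)) =
      (k + 2) * (∑ i ∈ range (k + 2), (g.choose i : ℤ)) -
        g * (∑ i ∈ range (k + 1), ((g - 1).choose i : ℤ)) := by
    rw [eq_sub_iff_add_eq]
    exact_mod_cast hweights
  refine ⟨hdegree, fun hg => ?_⟩
  rw [hdegree, ← Nat.cast_sum, Nat.sum_range_choose_of_lt (by omega)]
  cases g with
  | zero => push_cast; ring
  | succ g =>
    rw [Nat.add_sub_cancel, ← Nat.cast_sum, Nat.sum_range_choose_of_lt (by omega)]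
    push_cast
    ring
end

section
/- Let C be a smooth complete curve of genus 1 and C^{(n)} its n-fold symmetric product, with numerical classes x (of the divisor X_P = {D : D − P ≥ 0}) and θ (of a fiber of the Abel–Jacobi map u : C^{(n)} → Pic^n(C)), satisfying θ² = 0 and x^n = θ x^{n−1}. Then the Euler characteristic of a line bundle ℒ on C^{(n)} numerically equivalent to aθ + bx with b ≥ 0 is χ(ℒ) = C(b+n, n) + (a−1)·C(b+n−1, n−1). -/
open PowerSeries

/-- The Todd power series `T(x) = x/(1 − e^{−x}) = ∑ Bₘ' xᵐ/m!` (Bernoulli numbers with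
`B₁' = 1/2`), with coefficients in the dual numbers `ℚ[θ]/(θ²)`. -/
noncomputable def toddSeries : PowerSeries (DualNumber ℚ) :=
  PowerSeries.mk fun m => algebraMap ℚ (DualNumber ℚ) (bernoulli' m / m.factorial)

/-- The formal derivative `T'(x) = ∑ B'_{m+1} xᵐ/m!` of the Todd series. -/
noncomputable def toddSeries' : PowerSeries (DualNumber ℚ) :=
  PowerSeries.mk fun m => algebraMap ℚ (DualNumber ℚ) (bernoulli' (m + 1) / m.factorial)

/-- The exponential series `e^{bx}`. -/
noncomputable def expSeries (b : ℕ) : PowerSeries (DualNumber ℚ) :=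
  PowerSeries.mk fun m => algebraMap ℚ (DualNumber ℚ) ((b : ℚ) ^ m / m.factorial)

/-!
With `T = x/(1 − e^{−x})` one has `T·(1 − e^{−x}) = x`; differentiating gives
`x·T' = T − T²e^{−x}`. Feeding this into `x·(e^{(c+1)x}T^{k+1})'` and comparing coefficients of
`x^{k+1}` yields `(k+1)·[x^{k+1}] e^{cx}T^{k+2} = (c+1)·[x^k] e^{(c+1)x}T^{k+1}`, which pins down
`[x^n] e^{cx}T^{n+1} = C(c+n, n)`. The `θ`-part of the Todd class contributes `−T'`, whose
coefficient is eliminated by the Leibniz rule for `(e^{bx}T^{k+1})'`.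
-/

namespace PowerSeries

variable {A : Type*} [CommRing A] [Algebra ℚ A]

theorem derivative_rescale_exp (c : A) :
    d⁄dX A (rescale c (exp A)) = C c * rescale c (exp A) := by
  ext n
  have hfac : (1 / (n + 1).factorial : ℚ) * (n + 1) = 1 / n.factorial := by
    rw [Nat.factorial_succ]; push_cast; field_simp
  rw [coeff_derivative, coeff_C_mul, coeff_rescale, coeff_rescale, coeff_exp, coeff_exp,
    ← hfac, map_mul, map_add, map_natCast, map_one, pow_succ]
  ring

theorem bernoulli'PowerSeries_mul_one_sub_exp_neg :
    bernoulli'PowerSeries A * (1 - rescale (-1) (exp A)) = X := by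
  have h := congrArg (· * rescale (-1 : A) (exp A)) (bernoulli'PowerSeries_mul_exp_sub_one A)
  have hinv : exp A * rescale (-1 : A) (exp A) = 1 := by
    simpa using exp_mul_exp_eq_exp_add (1 : A) (-1)
  linear_combination h - (bernoulli'PowerSeries A - X) * hinv

theorem X_mul_derivative_bernoulli'PowerSeries :
    X * d⁄dX A (bernoulli'PowerSeries A) =
      bernoulli'PowerSeries A - bernoulli'PowerSeries A ^ 2 * rescale (-1) (exp A) := by
  have h := congrArg (d⁄dX A) (bernoulli'PowerSeries_mul_one_sub_exp_neg (A := A))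
  rw [Derivation.leibniz, map_sub, Derivation.map_one_eq_zero, derivative_rescale_exp,
    derivative_X, smul_eq_mul, smul_eq_mul, map_neg, map_one] at h
  linear_combination bernoulli'PowerSeries A * h -
    d⁄dX A (bernoulli'PowerSeries A) * bernoulli'PowerSeries_mul_one_sub_exp_neg (A := A)

theorem succ_mul_coeff_rescale_exp_mul_bernoulli'PowerSeries_pow (c k : ℕ) :
    (k + 1) • coeff (k + 1) (rescale (c : A) (exp A) * bernoulli'PowerSeries A ^ (k + 2)) =
      (c + 1) • coeff k (rescale (c + 1 : A) (exp A) * bernoulli'PowerSeries A ^ (k + 1)) := by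
  set T := bernoulli'PowerSeries A
  set E := rescale (c + 1 : A) (exp A)
  have hE : E * rescale (-1) (exp A) = rescale (c : A) (exp A) := by
    rw [exp_mul_exp_eq_exp_add]; ring_nf
  have hD : X * d⁄dX A (E * T ^ (k + 1)) =
      (c + 1) • (X * (E * T ^ (k + 1))) + (k + 1) • (E * T ^ (k + 1)) -
        (k + 1) • (rescale (c : A) (exp A) * T ^ (k + 2)) := by
    rw [Derivation.leibniz, Derivation.leibniz_pow, derivative_rescale_exp, ← hE]
    simp only [smul_eq_mul, nsmul_eq_mul, Nat.cast_add, Nat.cast_one, Nat.add_sub_cancel,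
      map_add, map_natCast, map_one]
    linear_combination
      (k + 1 : A⟦X⟧) * E * T ^ k * X_mul_derivative_bernoulli'PowerSeries (A := A)
  have hcoeff := congrArg (coeff (k + 1)) hD
  rw [coeff_succ_X_mul, coeff_derivative, map_sub, map_add, map_nsmul, map_nsmul, map_nsmul,
    coeff_succ_X_mul] at hcoeff
  simp only [nsmul_eq_mul, Nat.cast_add, Nat.cast_one] at hcoeff ⊢
  linear_combination hcoeff

theorem coeff_rescale_exp_mul_bernoulli'PowerSeries_pow (c n : ℕ) :
    coeff n (rescale (c : A) (exp A) * bernoulli'PowerSeries A ^ (n + 1)) =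
      ((c + n).choose n : A) := by
  induction n generalizing c with
  | zero => simp [bernoulli'PowerSeries, coeff_mul, coeff_rescale]
  | succ k ih =>
    have hrec := succ_mul_coeff_rescale_exp_mul_bernoulli'PowerSeries_pow (A := A) c k
    have hchoose : (c + 1) * (c + 1 + k).choose k = (k + 1) * (c + (k + 1)).choose (k + 1) := by
      rw [mul_comm (k + 1), Nat.choose_succ_right_eq, mul_comm, Nat.add_right_comm c 1 k]
      congr 1; omega
    have := IsAddTorsionFree.of_module_rat A
    refine (smul_right_inj (Nat.succ_ne_zero k)).mp ?_
    rw [hrec, ← Nat.cast_add_one, ih, nsmul_eq_mul, nsmul_eq_mul, ← Nat.cast_mul, ← Nat.cast_mul,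
      hchoose]

theorem coeff_succ_sub_coeff_derivative_bernoulli'PowerSeries (b k : ℕ) :
    coeff (k + 1) (rescale (b : A) (exp A) * bernoulli'PowerSeries A ^ (k + 1)) -
        coeff k (rescale (b : A) (exp A) * bernoulli'PowerSeries A ^ k *
          d⁄dX A (bernoulli'PowerSeries A)) =
      ((b + k).choose (k + 1) : A) := by
  set T := bernoulli'PowerSeries A
  set E := rescale (b : A) (exp A)
  have hD : d⁄dX A (E * T ^ (k + 1)) =
      (k + 1) • (E * T ^ k * d⁄dX A T) + b • (E * T ^ (k + 1)) := by
    rw [Derivation.leibniz, Derivation.leibniz_pow, derivative_rescale_exp]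
    simp only [smul_eq_mul, nsmul_eq_mul, Nat.add_sub_cancel, map_natCast]
    ring
  have hcoeff := congrArg (coeff k) hD
  rw [coeff_derivative, map_add, map_nsmul, map_nsmul,
    coeff_rescale_exp_mul_bernoulli'PowerSeries_pow] at hcoeff
  have hchoose : (b * (b + k).choose k : A) = (k + 1) * (b + k).choose (k + 1) := by
    rw [← Nat.cast_add_one, ← Nat.cast_mul, ← Nat.cast_mul, mul_comm (k + 1),
      Nat.choose_succ_right_eq, Nat.add_sub_cancel, mul_comm]
  have := IsAddTorsionFree.of_module_rat A
  refine (smul_right_inj (Nat.succ_ne_zero k)).mp ?_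
  simp only [nsmul_eq_mul] at hcoeff ⊢
  push_cast at hcoeff ⊢
  linear_combination hcoeff + hchoose

end PowerSeries

namespace DualNumber

open TrivSqZeroExt

variable {R : Type*} [CommRing R]

theorem fst_one_add_smul_eps_mul_sub_eps_mul (r : R) (x y : R[ε]) :
    fst ((1 + r • ε) * (x - ε * y)) = fst x := by
  simp

theorem snd_one_add_smul_eps_mul_sub_eps_mul (r : R) (x y : R[ε]) :
    snd ((1 + r • ε) * (x - ε * y)) = snd x + r * fst x - fst y := by
  simp only [DualNumber.snd_mul, fst_mul, fst_add, fst_sub, fst_one, fst_smul, fst_eps, snd_add,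
    snd_sub, snd_one, snd_smul, snd_eps, smul_eq_mul]
  ring

end DualNumber

theorem toddSeries_eq_bernoulli'PowerSeries :
    toddSeries = bernoulli'PowerSeries (DualNumber ℚ) :=
  rfl

theorem expSeries_eq_rescale_exp (b : ℕ) : expSeries b = rescale (b : DualNumber ℚ) (exp _) := by
  refine PowerSeries.ext fun m => ?_
  rw [expSeries, coeff_mk, coeff_rescale, coeff_exp, div_eq_mul_one_div, map_mul, map_pow,
    map_natCast]

theorem toddSeries'_eq_derivative : toddSeries' = d⁄dX _ toddSeries := by
  refine PowerSeries.ext fun m => ?_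
  have hfac : (bernoulli' (m + 1) / (m + 1).factorial : ℚ) * (m + 1) =
      bernoulli' (m + 1) / m.factorial := by
    rw [Nat.factorial_succ]; push_cast; field_simp
  rw [toddSeries', toddSeries, coeff_mk, coeff_derivative, coeff_mk, ← hfac, map_mul, map_add,
    map_natCast, map_one]

/-- Let `C` be a smooth complete curve of genus 1 and `C^{(n)}` its `n`-fold
symmetric product, whose ring of cycles modulo numerical equivalence is
`ℚ[θ,x]/(θ², xⁿ − θxⁿ⁻¹)`.  By Hirzebruch–Riemann–Roch, the Euler characteristic of a line
bundle `ℒ` numerically equivalent to `aθ + bx` (with `b ≥ 0`) is the degree-`n` part of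
`(1 + aθ)·e^{bx}·(x/(1−e^{−x}))^{n−1}·((x−θ)/(1−e^{θ−x}))`.  Working in power series over the
dual numbers `ℚ[θ]/(θ²)` (so that `(x−θ)/(1−e^{θ−x}) = T(x) − θT'(x)`), and reading off the
degree-`n` part via the relation `xⁿ = θxⁿ⁻¹` (i.e. the `θ⁰`-coefficient of `xⁿ` plus the
`θ`-coefficient of `xⁿ⁻¹`), this equals `χ(ℒ) = C(b+n, n) + (a−1)·C(b+n−1, n−1)`. -/
theorem stmt17 (n : ℕ) (hn : 1 ≤ n) (a : ℤ) (b : ℕ) :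
    (TrivSqZeroExt.fst (PowerSeries.coeff (R := DualNumber ℚ) n
        ((PowerSeries.C (R := DualNumber ℚ) (1 + (a : ℚ) • DualNumber.eps)) *
          expSeries b * toddSeries ^ (n - 1) *
          (toddSeries - PowerSeries.C (R := DualNumber ℚ) DualNumber.eps * toddSeries'))) +
      TrivSqZeroExt.snd (PowerSeries.coeff (R := DualNumber ℚ) (n - 1)
        ((PowerSeries.C (R := DualNumber ℚ) (1 + (a : ℚ) • DualNumber.eps)) *
          expSeries b * toddSeries ^ (n - 1) *
          (toddSeries - PowerSeries.C (R := DualNumber ℚ) DualNumber.eps * toddSeries')))) =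
    ((b + n).choose n : ℚ) + ((a : ℚ) - 1) * ((b + n - 1).choose (n - 1)) := by
  obtain ⟨k, rfl⟩ := Nat.exists_eq_add_of_le' hn
  have hu := coeff_rescale_exp_mul_bernoulli'PowerSeries_pow (A := DualNumber ℚ) b k
  have hdiff := congrArg TrivSqZeroExt.fst
    (coeff_succ_sub_coeff_derivative_bernoulli'PowerSeries (A := DualNumber ℚ) b k)
  rw [toddSeries'_eq_derivative, expSeries_eq_rescale_exp, toddSeries_eq_bernoulli'PowerSeries]
  simp only [Nat.add_sub_cancel]
  set T := bernoulli'PowerSeries (DualNumber ℚ)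
  set u := rescale (b : DualNumber ℚ) (exp _) * T ^ (k + 1)
  set v := rescale (b : DualNumber ℚ) (exp _) * T ^ k * d⁄dX _ T
  rw [show ∀ r : DualNumber ℚ, C r * rescale (b : DualNumber ℚ) (exp _) * T ^ k *
      (T - C DualNumber.eps * d⁄dX _ T) = C r * (u - C DualNumber.eps * v) from fun r => by ring,
    coeff_C_mul, coeff_C_mul, map_sub, map_sub, coeff_C_mul, coeff_C_mul,
    DualNumber.fst_one_add_smul_eps_mul_sub_eps_mul,
    DualNumber.snd_one_add_smul_eps_mul_sub_eps_mul, hu,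
    TrivSqZeroExt.fst_natCast, TrivSqZeroExt.snd_natCast, ← Nat.add_assoc, Nat.choose_succ_succ']
  rw [TrivSqZeroExt.fst_sub, TrivSqZeroExt.fst_natCast] at hdiff
  push_cast
  linear_combination hdiff
end
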